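/- For every h ∈ {1,…,n} and every a ∈ ℤ ∪ {∞}, the set T(h,a) is a triangulation of the punctured completed (n,∞)-gon P_{\overline{n,∞}}: its elements are pairwise non-crossing, and every tagged edge not belonging to T(h,a) crosses some element of T(h,a). -/

import Mathlib

/-!
STATEMENT 4: For every line `h` and every `a ∈ ℤ ∪ {∞}`, the set `T(h,a)` of all tagged
edges of the punctured completed `(n,∞)`-gon with first endpoint `(h,a)` is a
triangulation: its elements are pairwise non-crossing, and every tagged edge not
belonging to `T(h,a)` crosses some element of `T(h,a)`.

Second coordinates live in `WithTop ℤ` (with `∞ + 1 = ∞`); lines are indexed by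
`Fin (n+1)`, covering all `n ≥ 1`.
-/

namespace CompletedPuncturedGon

/-- An (unconstrained) edge datum of the punctured completed `(n+1,∞)`-gon. -/
structure EdgeC (n : ℕ) where
  p : Fin (n + 1) × WithTop ℤ
  q : Fin (n + 1) × WithTop ℤ
  sgn : ℤ

/-- `E` is a tagged edge: `q ≠ (p₁, p₂ + 1)`, the sign is `±1`, and the sign is `+1`
whenever the two endpoints are distinct. -/
def IsTaggedC {n : ℕ} (E : EdgeC n) : Prop :=
  E.q ≠ (E.p.1, E.p.2 + 1) ∧ (E.sgn = 1 ∨ E.sgn = -1) ∧ (E.p ≠ E.q → E.sgn = 1)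

/-- `σ(a) = 1/2 + a/(2(1+|a|)) ∈ (0,1)`. -/
noncomputable def sig (a : ℤ) : ℝ := 1 / 2 + (a : ℝ) / (2 * (1 + |(a : ℝ)|))

/-- The embedding of the marked points into the circle `ℝ/ℤ`; the accumulation point of
the `h`-th line (`a = ∞`) goes to `(h+1)/(n+1)`. -/
noncomputable def thetaC (n : ℕ) (p : Fin (n + 1) × WithTop ℤ) : ℝ :=
  WithTop.recTopCoe (((p.1.val : ℝ) + 1) / (n + 1))
    (fun a : ℤ => ((p.1.val : ℝ) + sig a) / (n + 1)) p.2

/-- `(x, y)` is a lift of the edge `E` (with distinct endpoints). -/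
def IsLiftC {n : ℕ} (E : EdgeC n) (x y : ℝ) : Prop :=
  (∃ k : ℤ, x = thetaC n E.p + k) ∧ (∃ k : ℤ, y = thetaC n E.q + k) ∧ x < y ∧ y < x + 1

/-- `E` crosses `F`. -/
def CrossesC {n : ℕ} (E F : EdgeC n) : Prop :=
  (E.p ≠ E.q ∧ F.p ≠ F.q ∧ ∃ x₁ y₁ x₂ y₂ : ℝ,
    IsLiftC E x₁ y₁ ∧ IsLiftC F x₂ y₂ ∧
    ((x₁ < x₂ ∧ x₂ < y₁ ∧ y₁ < y₂) ∨ (x₂ < x₁ ∧ x₁ < y₂ ∧ y₂ < y₁))) ∨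
  (E.p ≠ E.q ∧ F.p = F.q ∧ ∃ x y t : ℝ,
    IsLiftC E x y ∧ (∃ k : ℤ, t = thetaC n F.p + k) ∧ x < t ∧ t < y) ∨
  (E.p = E.q ∧ F.p ≠ F.q ∧ ∃ x y t : ℝ,
    IsLiftC F x y ∧ (∃ k : ℤ, t = thetaC n E.p + k) ∧ x < t ∧ t < y) ∨
  (E.p = E.q ∧ F.p = F.q ∧ E.p ≠ F.p ∧ E.sgn ≠ F.sgn)

/-- A set of edges is pairwise non-crossing. -/
def PairwiseNoncrossingC {n : ℕ} (T : Set (EdgeC n)) : Prop :=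
  ∀ E ∈ T, ∀ F ∈ T, ¬ CrossesC E F

/-- `T(h,a)`: the set of all tagged edges whose first endpoint is `(h,a)`. -/
def TsetC (n : ℕ) (h : Fin (n + 1)) (a : WithTop ℤ) : Set (EdgeC n) :=
  {E : EdgeC n | IsTaggedC E ∧ E.p = (h, a)}

/-!
Every edge of `T(h,a)` leaves `P = (h,a)`, and two lifts of the same point differ by an integer,
so no two of them cross. Conversely, let `E` be a tagged edge leaving `u ≠ P`; measure positions
by the counterclockwise distance from `u`. If `E` is an arc `u → v` with `P` strictly inside it,
`E` is crossed by the puncture edge at `P`, or by the arc `P → u` when `P = (h,∞)` (an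
accumulation point carries no puncture edge since `∞ + 1 = ∞`). A puncture edge at `u` is crossed
by the oppositely tagged puncture edge at `P` when `a` is finite. In the remaining cases `E` is
crossed by an arc from `P` to a marked point `w` just after `u`: the successor `(k, b + 1)` of
`u = (k, b)`, or a point `(k + 1, b)` with `b ≪ 0` when `u = (k, ∞)`.
-/

lemma sig_strictMono : StrictMono sig := by
  intro a b hab
  have hab' : (a : ℝ) < b := by exact_mod_cast hab
  have ha : (0 : ℝ) < 2 * (1 + |(a : ℝ)|) := by positivity
  have hb : (0 : ℝ) < 2 * (1 + |(b : ℝ)|) := by positivity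
  have key : (a : ℝ) / (2 * (1 + |(a : ℝ)|)) < b / (2 * (1 + |(b : ℝ)|)) := by
    rw [div_lt_div_iff₀ ha hb]
    rcases abs_cases (a : ℝ) with ⟨_, _⟩ | ⟨_, _⟩ <;>
      rcases abs_cases (b : ℝ) with ⟨_, _⟩ | ⟨_, _⟩ <;> nlinarith
  unfold sig
  linarith

lemma sig_mem_Ioo (a : ℤ) : sig a ∈ Set.Ioo 0 1 := by
  have hpos : (0 : ℝ) < 2 * (1 + |(a : ℝ)|) := by positivity
  have key : |(a : ℝ) / (2 * (1 + |(a : ℝ)|))| < 1 / 2 := by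
    rw [abs_div, abs_of_pos hpos, div_lt_iff₀ hpos]
    linarith [abs_nonneg (a : ℝ)]
  obtain ⟨h₁, h₂⟩ := abs_lt.mp key
  constructor <;> unfold sig <;> linarith

lemma sig_of_nonpos {a : ℤ} (ha : a ≤ 0) : sig a = 1 / (2 * (1 - a)) := by
  have ha' : (a : ℝ) ≤ 0 := by exact_mod_cast ha
  have h1 : (0 : ℝ) < 1 - a := by linarith
  rw [sig, abs_of_nonpos ha', ← sub_eq_add_neg]
  field_simp
  ring

lemma eventually_sig_lt {ε : ℝ} (hε : 0 < ε) : ∀ᶠ a in Filter.atBot, sig a < ε := by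
  refine Filter.eventually_atBot.mpr ⟨-⌈ε⁻¹⌉, fun a ha => ?_⟩
  have hceil : ε⁻¹ ≤ (⌈ε⁻¹⌉ : ℝ) := Int.le_ceil _
  have ha' : (a : ℝ) ≤ -⌈ε⁻¹⌉ := by exact_mod_cast ha
  have hinv : 0 < ε⁻¹ := inv_pos.mpr hε
  have hbig : ε⁻¹ < 2 * (1 - a) := by linarith
  rw [sig_of_nonpos (by linarith [Int.ceil_pos.mpr hinv] : a ≤ 0), one_div]
  exact (inv_lt_comm₀ (by linarith) hε).mpr hbig

noncomputable def sigTop : WithTop ℤ → ℝ := WithTop.recTopCoe 1 sig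

@[simp] lemma sigTop_top : sigTop ⊤ = 1 := rfl

@[simp] lemma sigTop_coe (a : ℤ) : sigTop a = sig a := rfl

lemma sigTop_mem_Ioc (β : WithTop ℤ) : sigTop β ∈ Set.Ioc 0 1 := by
  induction β using WithTop.recTopCoe with
  | top => simp
  | coe a => exact Set.Ioo_subset_Ioc_self (sig_mem_Ioo a)

lemma sigTop_strictMono : StrictMono sigTop := by
  intro β γ hβγ
  induction β using WithTop.recTopCoe with
  | top => exact absurd hβγ not_top_lt
  | coe b =>
    induction γ using WithTop.recTopCoe with
    | top => exact (sig_mem_Ioo b).2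
    | coe c => exact sig_strictMono (WithTop.coe_lt_coe.mp hβγ)

variable {n : ℕ}

lemma thetaC_eq (p : Fin (n + 1) × WithTop ℤ) :
    thetaC n p = (p.1 + sigTop p.2) / (n + 1) := by
  obtain ⟨k, β⟩ := p
  induction β using WithTop.recTopCoe <;> rfl

lemma thetaC_mem_Ioc (p : Fin (n + 1) × WithTop ℤ) : thetaC n p ∈ Set.Ioc 0 1 := by
  obtain ⟨hs₀, hs₁⟩ := sigTop_mem_Ioc p.2
  have hk : (p.1 : ℝ) + 1 ≤ n + 1 := by exact_mod_cast Nat.succ_le_succ (Fin.is_le p.1)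
  rw [thetaC_eq]
  constructor
  · positivity
  · rw [div_le_one (by positivity)]
    linarith

lemma thetaC_strictMono_lex :
    StrictMono (fun p : Fin (n + 1) ×ₗ WithTop ℤ => thetaC n (ofLex p)) := by
  rintro ⟨k, β⟩ ⟨l, γ⟩ hlt
  change thetaC n (k, β) < thetaC n (l, γ)
  simp only [thetaC_eq]
  gcongr ?_ / _
  rcases Prod.Lex.toLex_lt_toLex.mp hlt with hkl | ⟨rfl, hβγ⟩
  · have hkl' : (k : ℝ) + 1 ≤ l := by exact_mod_cast hkl
    linarith [(sigTop_mem_Ioc β).2, (sigTop_mem_Ioc γ).1]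
  · linarith [sigTop_strictMono hβγ]

lemma thetaC_lt_thetaC_iff {p q : Fin (n + 1) × WithTop ℤ} :
    thetaC n p < thetaC n q ↔ toLex p < toLex q :=
  thetaC_strictMono_lex.lt_iff_lt

lemma thetaC_injective : Function.Injective (thetaC n) :=
  fun _ _ h => toLex.injective (thetaC_strictMono_lex.injective h)

lemma _root_.WithTop.coe_add_one_le_of_lt {b : ℤ} {γ : WithTop ℤ}
    (hb : (b : WithTop ℤ) < γ) : (b : WithTop ℤ) + 1 ≤ γ := by
  induction γ using WithTop.recTopCoe with
  | top => exact le_top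
  | coe c => exact_mod_cast Int.add_one_le_of_lt (WithTop.coe_lt_coe.mp hb)

lemma ne_succ_of_ne {p q : Fin (n + 1) × WithTop ℤ} (h : p ≠ q) :
    (p.1, p.2 + 1) ≠ (q.1, q.2 + 1) := by
  intro heq
  obtain ⟨h₁, h₂⟩ := Prod.ext_iff.mp heq
  exact h (Prod.ext h₁ (WithTop.add_right_cancel WithTop.one_ne_top h₂))

noncomputable def ccwDist (n : ℕ) (u v : Fin (n + 1) × WithTop ℤ) : ℝ :=
  Int.fract (thetaC n v - thetaC n u)

variable {u v : Fin (n + 1) × WithTop ℤ}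

lemma ccwDist_eq_sub (h : thetaC n u ≤ thetaC n v) :
    ccwDist n u v = thetaC n v - thetaC n u := by
  rw [ccwDist, Int.fract_eq_self]
  exact ⟨by linarith, by linarith [(thetaC_mem_Ioc u).1, (thetaC_mem_Ioc v).2]⟩

lemma ccwDist_eq_sub_add_one (h : thetaC n v < thetaC n u) :
    ccwDist n u v = thetaC n v - thetaC n u + 1 := by
  rw [ccwDist, Int.fract_eq_iff]
  exact ⟨by linarith [(thetaC_mem_Ioc v).1, (thetaC_mem_Ioc u).2], by linarith, -1,
    by push_cast; ring⟩

lemma ccwDist_pos (h : u ≠ v) : 0 < ccwDist n u v := by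
  rcases lt_or_gt_of_ne (thetaC_injective.ne h) with huv | hvu
  · rw [ccwDist_eq_sub huv.le]
    linarith
  · rw [ccwDist_eq_sub_add_one hvu]
    linarith [(thetaC_mem_Ioc v).1, (thetaC_mem_Ioc u).2]

lemma ccwDist_nonneg (u v : Fin (n + 1) × WithTop ℤ) : 0 ≤ ccwDist n u v :=
  Int.fract_nonneg _

lemma ccwDist_lt_one (u v : Fin (n + 1) × WithTop ℤ) : ccwDist n u v < 1 :=
  Int.fract_lt_one _

lemma exists_add_ccwDist_eq (u v : Fin (n + 1) × WithTop ℤ) :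
    ∃ k : ℤ, thetaC n u + ccwDist n u v = thetaC n v + k :=
  ⟨-⌊thetaC n v - thetaC n u⌋, by rw [ccwDist, Int.fract]; push_cast; ring⟩

lemma ccwDist_succ_lt {k : Fin (n + 1)} {b : ℤ} (hv : v ≠ (k, (b : WithTop ℤ)))
    (hv' : v ≠ (k, (b : WithTop ℤ) + 1)) :
    ccwDist n (k, (b : WithTop ℤ)) (k, (b : WithTop ℤ) + 1) <
      ccwDist n (k, (b : WithTop ℤ)) v := by
  have hsucc : thetaC n (k, (b : WithTop ℤ)) < thetaC n (k, (b : WithTop ℤ) + 1) :=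
    thetaC_lt_thetaC_iff.mpr <| Prod.Lex.toLex_lt_toLex.mpr <|
      Or.inr ⟨rfl, show (b : WithTop ℤ) < b + 1 by exact_mod_cast lt_add_one b⟩
  rw [ccwDist_eq_sub hsucc.le]
  rcases lt_or_gt_of_ne (thetaC_injective.ne hv.symm) with hlt | hgt
  · suffices thetaC n (k, (b : WithTop ℤ) + 1) < thetaC n v by
      rw [ccwDist_eq_sub hlt.le]
      linarith
    obtain ⟨l, γ⟩ := v
    rw [thetaC_lt_thetaC_iff] at hlt ⊢
    rcases Prod.Lex.toLex_lt_toLex.mp hlt with hkl | ⟨rfl, hbγ⟩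
    · exact Prod.Lex.toLex_lt_toLex.mpr (Or.inl hkl)
    · refine Prod.Lex.toLex_lt_toLex.mpr (Or.inr ⟨rfl, ?_⟩)
      exact (WithTop.coe_add_one_le_of_lt hbγ).lt_of_ne fun h => hv' (Prod.ext rfl h.symm)
  · rw [ccwDist_eq_sub_add_one hgt]
    linarith [(thetaC_mem_Ioc (k, (b : WithTop ℤ) + 1)).2, (thetaC_mem_Ioc v).1]

lemma ccwDist_top_succ (k : Fin (n + 1)) (b : ℤ) :
    ccwDist n (k, ⊤) (k + 1, b) = sig b / (n + 1) := by
  have hN : (0 : ℝ) < n + 1 := by positivity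
  have hsig := sig_mem_Ioo b
  rcases eq_or_ne k (Fin.last n) with rfl | hk
  · have hθ : thetaC n (Fin.last n + 1, b) = sig b / (n + 1) := by
      simp [thetaC_eq]
    have htop : thetaC n (Fin.last n, ⊤) = 1 := by
      simp [thetaC_eq, div_self hN.ne']
    rw [ccwDist_eq_sub_add_one, hθ, htop]
    · ring
    · rw [hθ, htop, div_lt_one hN]
      linarith [hsig.2, (Nat.cast_nonneg n : (0 : ℝ) ≤ n)]
  · have hθ : thetaC n (k + 1, b) - thetaC n (k, ⊤) = sig b / (n + 1) := by
      simp only [thetaC_eq, Fin.val_add_one, hk, if_false, sigTop_coe, sigTop_top]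
      push_cast
      ring
    rw [ccwDist_eq_sub (by linarith [div_pos hsig.1 hN]), hθ]

lemma eventually_coe_ne (ρ : WithTop ℤ) :
    ∀ᶠ b : ℤ in Filter.atBot, (b : WithTop ℤ) ≠ ρ := by
  induction ρ using WithTop.recTopCoe with
  | top => exact Filter.Eventually.of_forall fun _ => WithTop.coe_ne_top
  | coe c => exact (Filter.eventually_ne_atBot c).mono fun _ h => by exact_mod_cast h

lemma exists_ne_ccwDist_lt {r : Fin (n + 1) × WithTop ℤ} (hvu : v ≠ u)
    (hv : v ≠ (u.1, u.2 + 1)) (hr : r ≠ (u.1, u.2 + 1)) :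
    ∃ w ≠ r, 0 < ccwDist n u w ∧ ccwDist n u w < ccwDist n u v := by
  obtain ⟨k, β⟩ := u
  induction β using WithTop.recTopCoe with
  | coe b =>
    refine ⟨(k, (b : WithTop ℤ) + 1), hr.symm, ccwDist_pos ?_, ccwDist_succ_lt hvu hv⟩
    simp [Prod.ext_iff, ← WithTop.coe_one, ← WithTop.coe_add]
  | top =>
    -- as `b → -∞` the points `(k + 1, b)` accumulate at `(k, ⊤)` from the counterclockwise side
    have hN : (0 : ℝ) < n + 1 := by positivity
    obtain ⟨b, hb, hbr⟩ := ((eventually_sig_lt (mul_pos (ccwDist_pos hvu.symm) hN)).and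
      (eventually_coe_ne r.2)).exists
    refine ⟨(k + 1, b), fun h => hbr (congrArg Prod.snd h), ?_, ?_⟩ <;>
      rw [ccwDist_top_succ]
    · exact div_pos (sig_mem_Ioo b).1 hN
    · rwa [div_lt_iff₀ hN]

lemma add_one_le_of_lt_of_eq_add_int {c x t : ℝ} (hx : ∃ k : ℤ, x = c + k)
    (ht : ∃ k : ℤ, t = c + k) (hxt : x < t) : x + 1 ≤ t := by
  obtain ⟨k, rfl⟩ := hx
  obtain ⟨m, rfl⟩ := ht
  have hkm : k < m := by exact_mod_cast (add_lt_add_iff_left c).mp hxt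
  have : (k : ℝ) + 1 ≤ m := by exact_mod_cast hkm
  linarith

lemma not_crossesC_of_p_eq {E F : EdgeC n} (h : E.p = F.p) : ¬ CrossesC E F := by
  rintro
    (⟨-, -, x₁, y₁, x₂, y₂, ⟨hx₁, -, -, hy₁⟩, ⟨hx₂, -, -, hy₂⟩, hlt | hlt⟩ |
    ⟨-, -, x, y, t, ⟨hx, -, -, hy⟩, ht, hxt, hty⟩ |
    ⟨-, -, x, y, t, ⟨hx, -, -, hy⟩, ht, hxt, hty⟩ | ⟨-, -, hne, -⟩)
  · rw [h] at hx₁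
    linarith [add_one_le_of_lt_of_eq_add_int hx₁ hx₂ hlt.1]
  · rw [h] at hx₁
    linarith [add_one_le_of_lt_of_eq_add_int hx₂ hx₁ hlt.1]
  · rw [← h] at ht
    linarith [add_one_le_of_lt_of_eq_add_int hx ht hxt]
  · rw [h] at ht
    linarith [add_one_le_of_lt_of_eq_add_int hx ht hxt]
  · exact hne h

lemma isLiftC_thetaC_ccwDist {E : EdgeC n} (h : E.p ≠ E.q) :
    IsLiftC E (thetaC n E.p) (thetaC n E.p + ccwDist n E.p E.q) :=
  ⟨⟨0, by simp⟩, exists_add_ccwDist_eq _ _, by linarith [ccwDist_pos h],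
    by linarith [ccwDist_lt_one E.p E.q]⟩

lemma isLiftC_ccwDist_sub_one (u : Fin (n + 1) × WithTop ℤ) {E : EdgeC n}
    (h : ccwDist n u E.q < ccwDist n u E.p) :
    IsLiftC E (thetaC n u + ccwDist n u E.p - 1) (thetaC n u + ccwDist n u E.q) := by
  obtain ⟨k, hk⟩ := exists_add_ccwDist_eq (n := n) u E.p
  refine ⟨⟨k - 1, by rw [hk]; push_cast; ring⟩, exists_add_ccwDist_eq _ _, ?_, by linarith⟩
  linarith [ccwDist_lt_one u E.p, ccwDist_nonneg u E.q]

lemma isLiftC_ccwDist_add_one {E : EdgeC n} (h : E.p ≠ E.q) :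
    IsLiftC E (thetaC n E.q + ccwDist n E.q E.p) (thetaC n E.q + 1) :=
  ⟨exists_add_ccwDist_eq _ _, ⟨1, by simp⟩, by linarith [ccwDist_lt_one E.q E.p],
    by linarith [ccwDist_pos h.symm]⟩

section Triangulation

variable {h : Fin (n + 1)} {a : WithTop ℤ}

lemma mem_TsetC_of_ne_succ {w : Fin (n + 1) × WithTop ℤ} (hw : w ≠ (h, a + 1)) :
    (⟨(h, a), w, 1⟩ : EdgeC n) ∈ TsetC n h a :=
  ⟨⟨hw, Or.inl rfl, fun _ => rfl⟩, rfl⟩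

lemma mem_TsetC_puncture (ha : a ≠ ⊤) {s : ℤ} (hs : s = 1 ∨ s = -1) :
    (⟨(h, a), (h, a), s⟩ : EdgeC n) ∈ TsetC n h a := by
  lift a to ℤ using ha
  refine ⟨⟨?_, hs, fun hne => absurd rfl hne⟩, rfl⟩
  simp [Prod.ext_iff, ← WithTop.coe_one, ← WithTop.coe_add]

lemma exists_crossesC_of_p_eq_q {E : EdgeC n} (hE : IsTaggedC E) (hpq : E.p = E.q)
    (hP : E.p ≠ (h, a)) : ∃ F ∈ TsetC n h a, CrossesC E F := by
  rcases eq_or_ne a ⊤ with rfl | ha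
  · -- `(h, ⊤)` carries no puncture edge; an arc from it ending just past `E.p` winds around `E.p`
    have hsucc : ((h, ⊤) : Fin (n + 1) × WithTop ℤ) = (h, ⊤ + 1) := rfl
    obtain ⟨w, hw, hw₀, hwP⟩ := exists_ne_ccwDist_lt (r := (h, ⊤)) (Ne.symm hP)
      (hsucc ▸ ne_succ_of_ne (Ne.symm hP)) (hsucc ▸ ne_succ_of_ne (Ne.symm hP))
    refine ⟨⟨(h, ⊤), w, 1⟩, mem_TsetC_of_ne_succ hw, Or.inr (Or.inr (Or.inl
      ⟨hpq, Ne.symm hw, thetaC n E.p + ccwDist n E.p (h, ⊤) - 1, thetaC n E.p + ccwDist n E.p w,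
        thetaC n E.p, isLiftC_ccwDist_sub_one E.p hwP, ⟨0, by simp⟩,
        ?_, ?_⟩))⟩
    · linarith [ccwDist_lt_one E.p (h, ⊤)]
    · linarith
  · have hsgn := hE.2.1
    refine ⟨⟨(h, a), (h, a), -E.sgn⟩, mem_TsetC_puncture ha (by omega),
      Or.inr (Or.inr (Or.inr ⟨hpq, rfl, hP, show E.sgn ≠ -E.sgn by omega⟩))⟩

lemma exists_crossesC_of_p_ne_q {E : EdgeC n} (hE : IsTaggedC E) (hpq : E.p ≠ E.q)
    (hP : E.p ≠ (h, a)) : ∃ F ∈ TsetC n h a, CrossesC E F := by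
  have hE_lift := isLiftC_thetaC_ccwDist hpq
  rcases lt_or_ge (ccwDist n E.p (h, a)) (ccwDist n E.p E.q) with hin | hout
  · rcases eq_or_ne a ⊤ with rfl | ha
    · refine ⟨⟨(h, ⊤), E.p, 1⟩, mem_TsetC_of_ne_succ hP, Or.inl ⟨hpq, Ne.symm hP, _, _,
        thetaC n E.p + ccwDist n E.p (h, ⊤), thetaC n E.p + 1, hE_lift,
        isLiftC_ccwDist_add_one (E := ⟨(h, ⊤), E.p, 1⟩) (Ne.symm hP),
        Or.inl ⟨?_, by linarith, ?_⟩⟩⟩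
      · linarith [ccwDist_pos hP]
      · linarith [ccwDist_lt_one E.p E.q]
    · refine ⟨⟨(h, a), (h, a), 1⟩, mem_TsetC_puncture ha (Or.inl rfl), Or.inr (Or.inl
        ⟨hpq, rfl, _, _, thetaC n E.p + ccwDist n E.p (h, a), hE_lift,
          exists_add_ccwDist_eq _ _, ?_, by linarith⟩)⟩
      linarith [ccwDist_pos hP]
  · obtain ⟨w, hw, hw₀, hwq⟩ :=
      exists_ne_ccwDist_lt (Ne.symm hpq) hE.1 (ne_succ_of_ne hP).symm
    have hwP : ccwDist n E.p w < ccwDist n E.p (h, a) := hwq.trans_le hout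
    refine ⟨⟨(h, a), w, 1⟩, mem_TsetC_of_ne_succ hw, Or.inl ⟨hpq, ?_, _, _,
      thetaC n E.p + ccwDist n E.p (h, a) - 1, thetaC n E.p + ccwDist n E.p w, hE_lift,
      isLiftC_ccwDist_sub_one (E := ⟨(h, a), w, 1⟩) E.p hwP,
      Or.inr ⟨?_, ?_, by linarith⟩⟩⟩
    · show (h, a) ≠ w
      rintro rfl
      exact lt_irrefl _ hwP
    · linarith [ccwDist_lt_one E.p (h, a)]
    · linarith

end Triangulation

/-- each `T(h,a)`, `a ∈ ℤ ∪ {∞}`, is a triangulation of the punctured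
completed `(n+1,∞)`-gon: its elements are pairwise non-crossing tagged edges, and every
tagged edge not belonging to `T(h,a)` crosses some element of `T(h,a)`. -/
theorem TsetC_isTriangulation (n : ℕ) (h : Fin (n + 1)) (a : WithTop ℤ) :
    (∀ E ∈ TsetC n h a, IsTaggedC E) ∧
    PairwiseNoncrossingC (TsetC n h a) ∧
    (∀ E : EdgeC n, IsTaggedC E → E ∉ TsetC n h a →
      ∃ F ∈ TsetC n h a, CrossesC E F) := by
  refine ⟨fun E hE => hE.1, fun E hE F hF => not_crossesC_of_p_eq (hE.2.trans hF.2.symm),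
    fun E hE hnot => ?_⟩
  have hP : E.p ≠ (h, a) := fun hp => hnot ⟨hE, hp⟩
  rcases eq_or_ne E.p E.q with hpq | hpq
  · exact exists_crossesC_of_p_eq_q hE hpq hP
  · exact exists_crossesC_of_p_ne_q hE hpq hP

end CompletedPuncturedGon
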